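/- arXiv:1401.1708 — 5 statements merged into one kernel-verified Lean document; each statement's English description precedes it below -/
import Mathlib

section
/- For a bivector field π on a manifold M, π is foliated (i.e. the image of π^#: Ω¹(M) → 𝔛(M) is an integrable distribution in the sense that [π^#(Ω¹(M)), π^#(Ω¹(M))] ⊆ π^#(Ω¹(M))) if and only if for every pair of smooth functions F, G on M there exists a 1-form α_{F,G} such that [X_F, X_G] = π^#(α_{F,G}), where X_F = π^#(dF). -/
open Matrix

noncomputable def lieBracketVF {n : ℕ} (X Y : (Fin n → ℝ) → (Fin n → ℝ)) :
    (Fin n → ℝ) → (Fin n → ℝ) :=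
  fun m => fderiv ℝ Y m (X m) - fderiv ℝ X m (Y m)

noncomputable def gradf {n : ℕ} (F : (Fin n → ℝ) → ℝ) (m : Fin n → ℝ) : Fin n → ℝ :=
  fun i => fderiv ℝ F m (Pi.single i 1)

noncomputable def ham {n : ℕ} (π : (Fin n → ℝ) → Matrix (Fin n) (Fin n) ℝ)
    (F : (Fin n → ℝ) → ℝ) : (Fin n → ℝ) → (Fin n → ℝ) :=
  fun m => π m *ᵥ gradf F m

def SmoothBiv {n : ℕ} (π : (Fin n → ℝ) → Matrix (Fin n) (Fin n) ℝ) : Prop :=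
  ∀ i j, ContDiff ℝ (⊤ : ℕ∞) fun m => π m i j

def AntiSymmBiv {n : ℕ} (π : (Fin n → ℝ) → Matrix (Fin n) (Fin n) ℝ) : Prop :=
  ∀ m, (π m)ᵀ = -π m

def Foliated {n : ℕ} (π : (Fin n → ℝ) → Matrix (Fin n) (Fin n) ℝ) : Prop :=
  ∀ α β : (Fin n → ℝ) → (Fin n → ℝ), ContDiff ℝ (⊤ : ℕ∞) α → ContDiff ℝ (⊤ : ℕ∞) β →
    ∃ γ : (Fin n → ℝ) → (Fin n → ℝ), ContDiff ℝ (⊤ : ℕ∞) γ ∧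
      ∀ m, lieBracketVF (fun p => π p *ᵥ α p) (fun p => π p *ᵥ β p) m = π m *ᵥ γ m

def WeaklyFoliated {n : ℕ} (π : (Fin n → ℝ) → Matrix (Fin n) (Fin n) ℝ) : Prop :=
  ∀ α β : (Fin n → ℝ) → (Fin n → ℝ), ContDiff ℝ (⊤ : ℕ∞) α → ContDiff ℝ (⊤ : ℕ∞) β →
    ∀ m, ∃ ξ : Fin n → ℝ,
      lieBracketVF (fun p => π p *ᵥ α p) (fun p => π p *ᵥ β p) m = π m *ᵥ ξ

noncomputable def pd {n : ℕ} (f : (Fin n → ℝ) → ℝ) (l : Fin n) (m : Fin n → ℝ) : ℝ :=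
  fderiv ℝ f m (Pi.single l 1)

noncomputable def schouten {n : ℕ} (π : (Fin n → ℝ) → Matrix (Fin n) (Fin n) ℝ)
    (m : Fin n → ℝ) (i j k : Fin n) : ℝ :=
  ∑ l, (π m l i * pd (fun p => π p j k) l m + π m l j * pd (fun p => π p k i) l m
      + π m l k * pd (fun p => π p i j) l m)

noncomputable def pb {n : ℕ} (π : (Fin n → ℝ) → Matrix (Fin n) (Fin n) ℝ)
    (F G : (Fin n → ℝ) → ℝ) (m : Fin n → ℝ) : ℝ :=
  dotProduct (gradf G m) (π m *ᵥ gradf F m)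

noncomputable def jacobianM {n : ℕ} (X : (Fin n → ℝ) → (Fin n → ℝ)) (m : Fin n → ℝ) :
    Matrix (Fin n) (Fin n) ℝ :=
  Matrix.of fun i l => fderiv ℝ (fun p => X p i) m (Pi.single l 1)

noncomputable def lieDerivBiv {n : ℕ} (X : (Fin n → ℝ) → (Fin n → ℝ))
    (π : (Fin n → ℝ) → Matrix (Fin n) (Fin n) ℝ) (m : Fin n → ℝ) :
    Matrix (Fin n) (Fin n) ℝ :=
  (Matrix.of fun i j => fderiv ℝ (fun p => π p i j) m (X m))
    - jacobianM X m * π m - π m * (jacobianM X m)ᵀ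

/-! The Hamiltonian vector field of the coordinate function `x_a` is the column `π e_a`. By the
product rule, `[π α, π β](m) = B_m(α(m), β(m)) + π (Dβ(π α) - Dα(π β))(m)` with `B_m` bilinear,
and on basis covectors `B_m(e_a, e_b) = [X_{x_a}, X_{x_b}](m)`. So if each
`[X_{x_a}, X_{x_b}] = π c_{ab}`, then `[π α, π β] = π (∑ α_a β_b c_{ab} + Dβ(π α) - Dα(π β))`.
The converse is the case `α = dF`, `β = dG`. -/

section
variable {n : ℕ}

noncomputable def bivDeriv (π : (Fin n → ℝ) → Matrix (Fin n) (Fin n) ℝ) (m : Fin n → ℝ) :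
    (Fin n → ℝ) →ₗ[ℝ] Matrix (Fin n) (Fin n) ℝ where
  toFun w := Matrix.of fun i j => fderiv ℝ (fun p => π p i j) m w
  map_add' w w' := by ext; simp
  map_smul' c w := by ext; simp

theorem fderiv_mulVec_apply {π : (Fin n → ℝ) → Matrix (Fin n) (Fin n) ℝ}
    {u : (Fin n → ℝ) → Fin n → ℝ} {m : Fin n → ℝ}
    (hπ : ∀ i j, DifferentiableAt ℝ (fun p => π p i j) m) (hu : DifferentiableAt ℝ u m)
    (w : Fin n → ℝ) :
    fderiv ℝ (fun p => π p *ᵥ u p) m w = bivDeriv π m w *ᵥ u m + π m *ᵥ fderiv ℝ u m w := by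
  have hterm (i k : Fin n) : DifferentiableAt ℝ (fun p => π p i k * u p k) m :=
    (hπ i k).mul (differentiableAt_pi.1 hu k)
  change fderiv ℝ (fun p i => ∑ k, π p i k * u p k) m w = _
  ext i
  rw [fderiv_pi fun i => DifferentiableAt.fun_sum fun k _ => hterm i k, add_comm]
  simp [fderiv_fun_sum fun k _ => hterm i k, fderiv_fun_mul (hπ i _) (differentiableAt_pi.1 hu _),
    fderiv_apply hu, bivDeriv, Matrix.mulVec, dotProduct, Finset.sum_add_distrib, mul_comm]

theorem contDiff_mulVec {π : (Fin n → ℝ) → Matrix (Fin n) (Fin n) ℝ}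
    {u : (Fin n → ℝ) → Fin n → ℝ} {k : WithTop ℕ∞}
    (hπ : ∀ i j, ContDiff ℝ k fun p => π p i j) (hu : ContDiff ℝ k u) :
    ContDiff ℝ k fun p => π p *ᵥ u p :=
  contDiff_pi.2 fun i => ContDiff.sum (s := Finset.univ) fun j _ =>
    (hπ i j).mul (contDiff_pi.1 hu j)

theorem contDiff_gradf {F : (Fin n → ℝ) → ℝ} {k k' : WithTop ℕ∞} (hF : ContDiff ℝ k F)
    (hk : k' + 1 ≤ k) : ContDiff ℝ k' (gradf F) :=
  contDiff_pi.2 fun _ => (hF.fderiv_right hk).clm_apply contDiff_const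

theorem gradf_coord (a : Fin n) (m : Fin n → ℝ) :
    gradf (fun p => p a) m = Pi.single a 1 := by
  ext k
  simp [gradf, (hasFDerivAt_apply a m).fderiv, Pi.single_apply, eq_comm]

theorem LinearMap.apply₂_eq_sum_single {ι R M : Type*} [Fintype ι] [DecidableEq ι]
    [CommSemiring R] [AddCommMonoid M] [Module R M] (B : (ι → R) →ₗ[R] (ι → R) →ₗ[R] M)
    (u v : ι → R) :
    B u v = ∑ a, ∑ b, (u a * v b) • B (Pi.single a 1) (Pi.single b 1) := by
  have single_eq_smul (x : ι → R) (a : ι) : Pi.single a (x a) = x a • Pi.single a (1 : R) := by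
    rw [← Pi.single_smul', smul_eq_mul, mul_one]
  conv_lhs => rw [← Finset.univ_sum_single u, ← Finset.univ_sum_single v]
  simp only [single_eq_smul, map_sum, map_smul, LinearMap.sum_apply, LinearMap.smul_apply,
    Finset.smul_sum, smul_smul, mul_comm]
  exact Finset.sum_comm

noncomputable def bivBracket (π : (Fin n → ℝ) → Matrix (Fin n) (Fin n) ℝ) (m : Fin n → ℝ) :
    (Fin n → ℝ) →ₗ[ℝ] (Fin n → ℝ) →ₗ[ℝ] (Fin n → ℝ) :=
  LinearMap.mk₂ ℝ (fun u v => bivDeriv π m (π m *ᵥ u) *ᵥ v - bivDeriv π m (π m *ᵥ v) *ᵥ u)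
    (fun u u' v => by simp only [mulVec_add, map_add, add_mulVec]; abel)
    (fun c u v => by simp only [mulVec_smul, map_smul, smul_mulVec, smul_sub])
    (fun u v v' => by simp only [mulVec_add, map_add, add_mulVec]; abel)
    (fun c u v => by simp only [mulVec_smul, map_smul, smul_mulVec, smul_sub])

theorem lieBracketVF_mulVec {π : (Fin n → ℝ) → Matrix (Fin n) (Fin n) ℝ}
    {α β : (Fin n → ℝ) → Fin n → ℝ} {m : Fin n → ℝ}
    (hπ : ∀ i j, DifferentiableAt ℝ (fun p => π p i j) m) (hα : DifferentiableAt ℝ α m)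
    (hβ : DifferentiableAt ℝ β m) :
    lieBracketVF (fun p => π p *ᵥ α p) (fun p => π p *ᵥ β p) m
      = bivBracket π m (α m) (β m)
        + π m *ᵥ (fderiv ℝ β m (π m *ᵥ α m) - fderiv ℝ α m (π m *ᵥ β m)) := by
  simp only [lieBracketVF, fderiv_mulVec_apply hπ hα, fderiv_mulVec_apply hπ hβ, bivBracket,
    LinearMap.mk₂_apply, mulVec_sub]
  abel

theorem ham_coord (π : (Fin n → ℝ) → Matrix (Fin n) (Fin n) ℝ) (a : Fin n) :
    ham π (fun p => p a) = fun p => π p *ᵥ Pi.single a 1 := by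
  ext p
  rw [ham, gradf_coord]

theorem lieBracketVF_ham_coord {π : (Fin n → ℝ) → Matrix (Fin n) (Fin n) ℝ} {m : Fin n → ℝ}
    (hπ : ∀ i j, DifferentiableAt ℝ (fun p => π p i j) m) (a b : Fin n) :
    lieBracketVF (ham π fun p => p a) (ham π fun p => p b) m
      = bivBracket π m (Pi.single a 1) (Pi.single b 1) := by
  rw [ham_coord, ham_coord, lieBracketVF_mulVec hπ (differentiableAt_const _)
    (differentiableAt_const _)]
  simp

end

theorem foliated_iff_brackets_of_hamiltonians_general {n : ℕ}
    (π : (Fin n → ℝ) → Matrix (Fin n) (Fin n) ℝ)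
    (hs : SmoothBiv π) :
    Foliated π ↔
      ∀ F G : (Fin n → ℝ) → ℝ, ContDiff ℝ (⊤ : ℕ∞) F → ContDiff ℝ (⊤ : ℕ∞) G →
        ∃ α : (Fin n → ℝ) → (Fin n → ℝ), ContDiff ℝ (⊤ : ℕ∞) α ∧
          ∀ m, lieBracketVF (ham π F) (ham π G) m = π m *ᵥ α m := by
  have hπ (m : Fin n → ℝ) (i j : Fin n) : DifferentiableAt ℝ (fun p => π p i j) m :=
    (hs i j).differentiable (by simp) m
  constructor
  · intro h F G hF hG
    exact h (gradf F) (gradf G) (contDiff_gradf hF (by simp)) (contDiff_gradf hG (by simp))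
  · intro h α β hα hβ
    choose c hc hbracket using fun a b : Fin n =>
      h (fun p => p a) (fun p => p b) (contDiff_apply ℝ ℝ a) (contDiff_apply ℝ ℝ b)
    refine ⟨fun m => ∑ a, ∑ b, (α m a * β m b) • c a b m
      + (fderiv ℝ β m (π m *ᵥ α m) - fderiv ℝ α m (π m *ᵥ β m)), ?_, fun m => ?_⟩
    · have hderiv {γ δ : (Fin n → ℝ) → Fin n → ℝ} (hγ : ContDiff ℝ (⊤ : ℕ∞) γ)
          (hδ : ContDiff ℝ (⊤ : ℕ∞) δ) :
          ContDiff ℝ (⊤ : ℕ∞) fun m => fderiv ℝ γ m (π m *ᵥ δ m) :=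
        (hγ.fderiv_right (by simp)).clm_apply (contDiff_mulVec hs hδ)
      exact (ContDiff.sum fun a _ => ContDiff.sum fun b _ =>
        ((contDiff_pi.1 hα a).mul (contDiff_pi.1 hβ b)).smul (hc a b)).add
          ((hderiv hβ hα).sub (hderiv hα hβ))
    · rw [lieBracketVF_mulVec (hπ m) (hα.differentiable (by simp) m)
        (hβ.differentiable (by simp) m), LinearMap.apply₂_eq_sum_single]
      simp only [← lieBracketVF_ham_coord (hπ m), hbracket, mulVec_add, mulVec_sum, mulVec_smul]

theorem foliated_iff_brackets_of_hamiltonians {n : ℕ}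
    (π : (Fin n → ℝ) → Matrix (Fin n) (Fin n) ℝ)
    (hs : SmoothBiv π) (ha : AntiSymmBiv π) :
    Foliated π ↔
      ∀ F G : (Fin n → ℝ) → ℝ, ContDiff ℝ (⊤ : ℕ∞) F → ContDiff ℝ (⊤ : ℕ∞) G →
        ∃ α : (Fin n → ℝ) → (Fin n → ℝ), ContDiff ℝ (⊤ : ℕ∞) α ∧
          ∀ m, lieBracketVF (ham π F) (ham π G) m = π m *ᵥ α m :=
  foliated_iff_brackets_of_hamiltonians_general π hs
end

section
/- A foliated bivector field of rank two on a manifold M is a Poisson structure, i.e. if π is foliated and the rank of π_m^# is at most 2 at every point, then [π, π] = 0. -/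
open Matrix

/-! `[π, π]` is totally antisymmetric, and for fixed `i, j` the vector `[π, π](dxᵢ, dxⱼ, ·)` is
`-[π^# dxᵢ, π^# dxⱼ] - π^# dπᵢⱼ`, which lies in the image of `π^#` because `π` is foliated.
If `[π, π](dxᵢ, dxⱼ, dxₖ) ≠ 0`, the three vectors `[π, π](dxⱼ, dxₖ, ·)`, `[π, π](dxₖ, dxᵢ, ·)`,
`[π, π](dxᵢ, dxⱼ, ·)` are linearly independent, since their `i`, `j`, `k` coordinates form a nonzero
multiple of the identity matrix; this contradicts `rank π^# ≤ 2`. -/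

section Alternating

variable {K ι : Type*} [Field K] {T : ι → ι → ι → K}

theorem linearIndependent_of_alternating (hcyc : ∀ a b c, T a b c = T b c a)
    (hdiag : ∀ a b, T a a b = 0) {i j k : ι} (hT : T i j k ≠ 0) :
    LinearIndependent K ![T j k, T k i, T i j] := by
  have hdiag' : ∀ a b, T a b b = 0 := fun a b => (hcyc a b b).trans (hdiag b a)
  have hmid : ∀ a b, T a b a = 0 := fun a b => (hcyc a b a).trans (hdiag' b a)
  rw [Fintype.linearIndependent_iff]
  intro g hg
  have hcomb : ∀ l, g 0 * T j k l + g 1 * T k i l + g 2 * T i j l = 0 := fun l => by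
    simpa [Fin.sum_univ_three] using congrFun hg l
  have h0 : g 0 * T i j k = 0 := by
    simpa [hcyc i j k, hdiag', hmid] using hcomb i
  have h1 : g 1 * T i j k = 0 := by
    simpa [hcyc i j k, hcyc j k i, hdiag', hmid] using hcomb j
  have h2 : g 2 * T i j k = 0 := by
    simpa [hdiag', hmid] using hcomb k
  intro t
  fin_cases t
  exacts [(mul_eq_zero.mp h0).resolve_right hT, (mul_eq_zero.mp h1).resolve_right hT,
    (mul_eq_zero.mp h2).resolve_right hT]

theorem alternating_eq_zero_of_finrank_le_two [Finite ι] (hcyc : ∀ a b c, T a b c = T b c a)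
    (hdiag : ∀ a b, T a a b = 0) {V : Submodule K (ι → K)} (hV : Module.finrank K V ≤ 2)
    (hmem : ∀ a b, T a b ∈ V) (i j k : ι) : T i j k = 0 := by
  by_contra hT
  have hspan := finrank_span_eq_card (linearIndependent_of_alternating hcyc hdiag hT)
  have hle : Submodule.span K (Set.range ![T j k, T k i, T i j]) ≤ V := by
    rw [Submodule.span_le, Set.range_subset_iff]
    intro t
    fin_cases t <;> apply hmem
  have := Submodule.finrank_mono hle
  simp only [Fintype.card_fin] at hspan
  omega

end Alternating

section Bivector

variable {n : ℕ} {π : (Fin n → ℝ) → Matrix (Fin n) (Fin n) ℝ}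

theorem AntiSymmBiv.apply_swap (ha : AntiSymmBiv π) (m : Fin n → ℝ) (a b : Fin n) :
    π m a b = -π m b a := by
  simpa using congrFun (congrFun (ha m) b) a

theorem AntiSymmBiv.pd_swap (ha : AntiSymmBiv π) (a b l : Fin n) (m : Fin n → ℝ) :
    pd (fun p => π p a b) l m = -pd (fun p => π p b a) l m := by
  simp only [pd, ha.apply_swap _ a b, fderiv_fun_neg]
  rfl

theorem schouten_cyclic (π : (Fin n → ℝ) → Matrix (Fin n) (Fin n) ℝ) (m : Fin n → ℝ)
    (i j k : Fin n) : schouten π m i j k = schouten π m j k i :=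
  Finset.sum_congr rfl fun _ _ => by ring

theorem AntiSymmBiv.schouten_self_left (ha : AntiSymmBiv π) (m : Fin n → ℝ) (a b : Fin n) :
    schouten π m a a b = 0 := by
  refine Finset.sum_eq_zero fun l _ => ?_
  have hself : pd (fun p => π p a a) l m = 0 := by linarith [ha.pd_swap a a l m]
  rw [hself, ha.pd_swap b a]
  ring

theorem Foliated.weaklyFoliated (h : Foliated π) : WeaklyFoliated π := fun α β hα hβ m =>
  let ⟨γ, _, hγ⟩ := h α β hα hβ
  ⟨γ m, hγ m⟩

theorem fderiv_apply_eq_sum_pd (f : (Fin n → ℝ) → ℝ) (m v : Fin n → ℝ) :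
    fderiv ℝ f m v = ∑ l, v l * pd f l m := by
  conv_lhs => rw [← Finset.univ_sum_single v]
  simp only [map_sum, pd]
  refine Finset.sum_congr rfl fun l _ => ?_
  rw [← smul_eq_mul, ← map_smul, ← Pi.single_smul', smul_eq_mul, mul_one]

theorem lieBracketVF_apply {X Y : (Fin n → ℝ) → (Fin n → ℝ)} {m : Fin n → ℝ}
    (hX : ∀ a, DifferentiableAt ℝ (fun p => X p a) m)
    (hY : ∀ a, DifferentiableAt ℝ (fun p => Y p a) m) (k : Fin n) :
    lieBracketVF X Y m k =
      ∑ l, (X m l * pd (fun p => Y p k) l m - Y m l * pd (fun p => X p k) l m) := by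
  simp only [lieBracketVF, Pi.sub_apply, fderiv_pi hX, fderiv_pi hY,
    ContinuousLinearMap.pi_apply, fderiv_apply_eq_sum_pd, ← Finset.sum_sub_distrib]

theorem lieBracketVF_mulVec_single {m : Fin n → ℝ}
    (hd : ∀ a b, DifferentiableAt ℝ (fun p => π p a b) m) (i j k : Fin n) :
    lieBracketVF (fun p => π p *ᵥ Pi.single i 1) (fun p => π p *ᵥ Pi.single j 1) m k =
      ∑ l, (π m l i * pd (fun p => π p k j) l m - π m l j * pd (fun p => π p k i) l m) := by
  simp only [mulVec_single_one]
  exact lieBracketVF_apply (fun a => hd a i) (fun a => hd a j) k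

theorem AntiSymmBiv.schouten_eq (ha : AntiSymmBiv π) {m : Fin n → ℝ}
    (hd : ∀ a b, DifferentiableAt ℝ (fun p => π p a b) m) (i j k : Fin n) :
    schouten π m i j k =
      -lieBracketVF (fun p => π p *ᵥ Pi.single i 1) (fun p => π p *ᵥ Pi.single j 1) m k
        - (π m *ᵥ gradf (fun p => π p i j) m) k := by
  rw [lieBracketVF_mulVec_single hd, ← Finset.sum_neg_distrib]
  simp only [schouten, mulVec, dotProduct, gradf, ← Finset.sum_sub_distrib]
  refine Finset.sum_congr rfl fun l _ => ?_
  rw [ha.pd_swap j k, ha.apply_swap m l k]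
  simp only [pd]
  ring

theorem AntiSymmBiv.schouten_mem_range (ha : AntiSymmBiv π) (hfol : WeaklyFoliated π)
    {m : Fin n → ℝ} (hd : ∀ a b, DifferentiableAt ℝ (fun p => π p a b) m) (i j : Fin n) :
    schouten π m i j ∈ LinearMap.range (π m).mulVecLin := by
  obtain ⟨ξ, hξ⟩ := hfol (fun _ => Pi.single i 1) (fun _ => Pi.single j 1)
    contDiff_const contDiff_const m
  have hsplit : schouten π m i j = -(π m *ᵥ ξ) - π m *ᵥ gradf (fun p => π p i j) m :=
    funext fun k => by rw [ha.schouten_eq hd, hξ]; rfl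
  rw [hsplit]
  exact sub_mem (neg_mem ⟨ξ, rfl⟩) ⟨_, rfl⟩

end Bivector

theorem foliated_rank_two_is_poisson {n : ℕ}
    (π : (Fin n → ℝ) → Matrix (Fin n) (Fin n) ℝ)
    (hs : SmoothBiv π) (ha : AntiSymmBiv π)
    (hfol : Foliated π)
    (hrank : ∀ m, (π m).rank ≤ 2) :
    ∀ m i j k, schouten π m i j k = 0 := by
  intro m
  have hd : ∀ a b, DifferentiableAt ℝ (fun p => π p a b) m := fun a b =>
    ((hs a b).differentiable (by simp)).differentiableAt
  exact alternating_eq_zero_of_finrank_le_two (schouten_cyclic π m) (ha.schouten_self_left m)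
    (hrank m) (ha.schouten_mem_range hfol.weaklyFoliated hd)
end

section
/- For the bivector fields π_A = (x²+y²) ∂/∂x ∧ ∂/∂y and π_B = (x²+y²)² ∂/∂x ∧ ∂/∂y on ℝ², the images of (π_A^#)_m and (π_B^#)_m coincide at every point m, yet there exists no smooth 1-form β on ℝ² with π_B^#(β) = π_A^#(dx); hence pointwise inclusion of images does not imply inclusion of images as module maps on global sections. -/
open Matrix

noncomputable def piA (m : Fin 2 → ℝ) : Matrix (Fin 2) (Fin 2) ℝ :=
  !![0, m 0 ^ 2 + m 1 ^ 2; -(m 0 ^ 2 + m 1 ^ 2), 0]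

noncomputable def piB (m : Fin 2 → ℝ) : Matrix (Fin 2) (Fin 2) ℝ :=
  !![0, (m 0 ^ 2 + m 1 ^ 2) ^ 2; -((m 0 ^ 2 + m 1 ^ 2) ^ 2), 0]

/-! The two bivectors differ by the factor `r = x² + y²`, which vanishes only at the origin, where
both are zero; hence their images agree pointwise. Globally, however, the second component of
`π_B^#(β) = π_A^#(dx)` reads `r² β₀ = r`, so `β₀ = 1/r` off the origin, which blows up there. -/

open Topology

def radiusSq (m : Fin 2 → ℝ) : ℝ := m 0 ^ 2 + m 1 ^ 2

lemma piB_eq_smul_piA (m : Fin 2 → ℝ) : piB m = radiusSq m • piA m := by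
  ext i j
  fin_cases i <;> fin_cases j <;> simp [piA, piB, radiusSq] <;> ring

lemma piA_eq_zero_of_radiusSq_eq_zero {m : Fin 2 → ℝ} (h : radiusSq m = 0) : piA m = 0 := by
  ext i j
  fin_cases i <;> fin_cases j <;> simp_all [piA, radiusSq]

lemma Matrix.range_mulVec_smul {ι κ 𝕜 : Type*} [Fintype κ] [Field 𝕜] (A : Matrix ι κ 𝕜) {c : 𝕜}
    (hc : c ≠ 0) : Set.range (fun ξ => (c • A) *ᵥ ξ) = Set.range (fun ξ => A *ᵥ ξ) := by
  ext v
  constructor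
  · rintro ⟨ξ, rfl⟩
    exact ⟨c • ξ, by simp [Matrix.mulVec_smul, Matrix.smul_mulVec]⟩
  · rintro ⟨ξ, rfl⟩
    exact ⟨c⁻¹ • ξ, by simp [Matrix.mulVec_smul, Matrix.smul_mulVec, smul_smul, hc]⟩

lemma radiusSq_mul_eq_one_of_piB_mulVec_eq {m b : Fin 2 → ℝ} (hm : radiusSq m ≠ 0)
    (h : piB m *ᵥ b = piA m *ᵥ Pi.single 0 1) : radiusSq m * b 0 = 1 := by
  have h₁ : -(radiusSq m ^ 2 * b 0) = -radiusSq m := by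
    simpa [piA, piB, radiusSq, Matrix.mulVec, dotProduct, Fin.sum_univ_two, add_comm] using
      congrFun h 1
  refine mul_left_cancel₀ hm ?_
  linear_combination -h₁

lemma not_continuousAt_zero_of_mul_sq_eq_one {f : ℝ → ℝ} (h : ∀ t ≠ 0, f t * t ^ 2 = 1) :
    ¬ ContinuousAt f 0 := by
  intro hf
  have hg : ContinuousAt (fun t => f t * t ^ 2) 0 := hf.mul (by fun_prop)
  have h₀ : Filter.Tendsto (fun t => f t * t ^ 2) (𝓝[≠] 0) (𝓝 0) := by
    simpa using hg.tendsto.mono_left nhdsWithin_le_nhds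
  have h₁ : Filter.Tendsto (fun t => f t * t ^ 2) (𝓝[≠] 0) (𝓝 1) :=
    tendsto_const_nhds.congr' (eventually_nhdsWithin_of_forall fun t ht => (h t ht).symm)
  exact zero_ne_one (tendsto_nhds_unique h₀ h₁)

theorem pointwise_image_eq_but_no_global_factorization :
    (∀ m : Fin 2 → ℝ,
      Set.range (fun ξ => piA m *ᵥ ξ) = Set.range (fun ξ => piB m *ᵥ ξ)) ∧
    ¬ ∃ β : (Fin 2 → ℝ) → (Fin 2 → ℝ), ContDiff ℝ (⊤ : ℕ∞) β ∧
        ∀ m, piB m *ᵥ β m = piA m *ᵥ Pi.single 0 1 := by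
  refine ⟨fun m => ?_, ?_⟩
  · by_cases hm : radiusSq m = 0
    · simp [piB_eq_smul_piA, hm, piA_eq_zero_of_radiusSq_eq_zero hm]
    · rw [piB_eq_smul_piA, Matrix.range_mulVec_smul _ hm]
  · rintro ⟨β, hβ, h⟩
    refine not_continuousAt_zero_of_mul_sq_eq_one (f := fun t => β ![t, 0] 0) (fun t ht => ?_) ?_
    · have hr : radiusSq ![t, 0] = t ^ 2 := by simp [radiusSq]
      rw [mul_comm, ← hr]
      exact radiusSq_mul_eq_one_of_piB_mulVec_eq (hr ▸ pow_ne_zero 2 ht) (h _)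
    · have hβc := hβ.continuous
      fun_prop
end

section
/- Let M be a manifold with a connection ∇ on TM with torsion Tor^∇, and X a vector field on M with flow φ_t. A smooth path b : [0,1] → TM whose base path is an integral curve of X is a tangent integral curve of X (i.e. b(t) = Tφ_t(b(0))) if and only if ∇_{ẋ} b = ∇_b X + Tor^∇(X, b) along the base path x(t). -/
open Matrix

/-!
In the flat coordinates of `ℝⁿ` the torsion terms cancel and the covariant condition says exactly
that `b` solves the variational equation `ḃ = DX(x t) b`. The curve `c t = Dφₜ(x 0) (b 0)` solves
it too: by the group law `φₛ = φₛ₋ₜ ∘ φₜ` it is enough to differentiate `h ↦ Dφₕ(p)` at `h = 0`,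
and `‖Dφₕ(p) - id - h • DX(p)‖ = o(h)` follows by comparing two nearby trajectories with
Grönwall's inequality and the mean value inequality. Uniqueness for linear ODEs gives `b = c`.
-/

open Set Metric Filter Topology Real
open scoped NNReal

variable {E : Type*} [NormedAddCommGroup E] [NormedSpace ℝ E]

theorem ODE_solution_unique_of_locallyLipschitz {v : ℝ → E → E}
    (hv : ∀ t x, ∃ K, ∃ s ∈ 𝓝 x, ∀ᶠ u in 𝓝 t, LipschitzOnWith K (v u) s)
    {f g : ℝ → E} (hf : ∀ t, HasDerivAt f (v t (f t)) t) (hg : ∀ t, HasDerivAt g (v t (g t)) t)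
    {t₀ : ℝ} (heq : f t₀ = g t₀) : f = g := by
  have hfc : Continuous f := continuous_iff_continuousAt.2 fun t => (hf t).continuousAt
  have hgc : Continuous g := continuous_iff_continuousAt.2 fun t => (hg t).continuousAt
  have hopen : IsOpen {t | f t = g t} := isOpen_iff_mem_nhds.2 fun t (ht : f t = g t) => by
    obtain ⟨K, s, hs, hlip⟩ := hv t (f t)
    exact ODE_solution_unique_of_eventually hlip
      ((hfc.continuousAt.eventually_mem hs).mono fun u hu => ⟨hf u, hu⟩)
      ((hgc.continuousAt.eventually_mem (ht ▸ hs)).mono fun u hu => ⟨hg u, hu⟩) ht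
  exact funext (eq_univ_iff_forall.1 (IsClopen.eq_univ ⟨isClosed_eq hfc hgc, hopen⟩ ⟨t₀, heq⟩))

theorem ODE_solution_unique_of_continuous_linear {A : ℝ → E →L[ℝ] E} (hA : Continuous A)
    {f g : ℝ → E} (hf : ∀ t, HasDerivAt f (A t (f t)) t) (hg : ∀ t, HasDerivAt g (A t (g t)) t)
    {t₀ : ℝ} (heq : f t₀ = g t₀) : f = g := by
  refine ODE_solution_unique_of_locallyLipschitz (fun t _ => ?_) hf hg heq
  refine ⟨‖A t‖₊ + 1, univ, univ_mem, ?_⟩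
  filter_upwards [(hA.nnnorm.tendsto t).eventually_lt_const (lt_add_one _)] with u hu
  exact ((A u).lipschitz.weaken hu.le).lipschitzOnWith

theorem mem_closedBall_of_hasDerivAt_of_norm_lt {X : E → E} {f : ℝ → E} {p : E} {r M T : ℝ}
    (hX : ∀ y ∈ closedBall p r, ‖X y‖ < M) (hM : 0 ≤ M) (hf : ∀ s, HasDerivAt f (X (f s)) s)
    (hT : ‖f 0 - p‖ + M * T ≤ r) : ∀ s ∈ Icc 0 T, f s ∈ closedBall p r := by
  have hB_le : ∀ s ∈ Icc 0 T, ‖f 0 - p‖ + M * s ≤ r := fun s hs =>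
    le_trans (by gcongr; exact hs.2) hT
  have hnorm : ∀ s ∈ Icc 0 T, ‖f s - p‖ ≤ ‖f 0 - p‖ + M * s := by
    refine image_norm_le_of_norm_deriv_right_lt_deriv_boundary (f := fun s => f s - p)
      (B' := fun _ => M) (fun s _ => ((hf s).sub_const p).continuousAt.continuousWithinAt)
      (fun s _ => ((hf s).sub_const p).hasDerivWithinAt) (by simp)
      (fun s => by simpa using ((hasDerivAt_id s).const_mul M).const_add ‖f 0 - p‖) ?_
    intro s hs hfs
    refine hX _ ?_
    rw [mem_closedBall, dist_eq_norm, hfs]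
    exact hB_le s (Ico_subset_Icc_self hs)
  intro s hs
  rw [mem_closedBall, dist_eq_norm]
  exact (hnorm s hs).trans (hB_le s hs)

theorem norm_sub_le_of_hasDerivAt_of_lipschitzOnWith {X : E → E} {U : Set E} {K : ℝ≥0} {h : ℝ}
    {f g : ℝ → E} (hlip : LipschitzOnWith K X U)
    (hf : ∀ s, HasDerivAt f (X (f s)) s) (hg : ∀ s, HasDerivAt g (X (g s)) s)
    (hfU : ∀ s ∈ Icc 0 h, f s ∈ U) (hgU : ∀ s ∈ Icc 0 h, g s ∈ U) :
    ∀ s ∈ Icc 0 h, ‖f s - g s‖ ≤ ‖f 0 - g 0‖ * exp (K * s) := by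
  intro s hs
  simpa only [dist_eq_norm, sub_zero] using dist_le_of_trajectories_ODE_of_mem
    (v := fun _ => X) (s := fun _ => U) (fun _ _ => hlip)
    (continuous_iff_continuousAt.2 fun t => (hf t).continuousAt).continuousOn
    (fun t _ => (hf t).hasDerivWithinAt) (fun t ht => hfU t (Ico_subset_Icc_self ht))
    (continuous_iff_continuousAt.2 fun t => (hg t).continuousAt).continuousOn
    (fun t _ => (hg t).hasDerivWithinAt) (fun t ht => hgU t (Ico_subset_Icc_self ht))
    le_rfl s hs

theorem norm_sub_sub_le_of_hasDerivAt_of_lipschitzOnWith {X : E → E} {U : Set E} {K : ℝ≥0}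
    {h : ℝ} {f g : ℝ → E} (hlip : LipschitzOnWith K X U)
    (hf : ∀ s, HasDerivAt f (X (f s)) s) (hg : ∀ s, HasDerivAt g (X (g s)) s)
    (hfU : ∀ s ∈ Icc 0 h, f s ∈ U) (hgU : ∀ s ∈ Icc 0 h, g s ∈ U) :
    ∀ s ∈ Icc 0 h, ‖(f s - g s) - (f 0 - g 0)‖ ≤ K * (‖f 0 - g 0‖ * exp (K * h)) * s := by
  have hX_le : ∀ s ∈ Icc 0 h, ‖X (f s) - X (g s)‖ ≤ K * (‖f 0 - g 0‖ * exp (K * h)) := by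
    intro s hs
    rw [← dist_eq_norm]
    refine (hlip.dist_le_mul _ (hfU s hs) _ (hgU s hs)).trans ?_
    rw [dist_eq_norm]
    gcongr
    exact (norm_sub_le_of_hasDerivAt_of_lipschitzOnWith hlip hf hg hfU hgU s hs).trans
      (by gcongr; exact hs.2)
  intro s hs
  simpa only [sub_zero] using norm_image_sub_le_of_norm_deriv_le_segment'
    (fun t _ => ((hf t).fun_sub (hg t)).hasDerivWithinAt)
    (fun t ht => hX_le t (Ico_subset_Icc_self ht)) s hs

theorem norm_sub_sub_sub_smul_le_of_hasDerivAt {X : E → E} {L : E →L[ℝ] E} {U : Set E}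
    {K : ℝ≥0} {ε h : ℝ} {f g : ℝ → E} (hU : Convex ℝ U)
    (hXd : ∀ y ∈ U, DifferentiableAt ℝ X y) (hlip : LipschitzOnWith K X U)
    (hL : ∀ y ∈ U, ‖fderiv ℝ X y - L‖ ≤ ε)
    (hf : ∀ s, HasDerivAt f (X (f s)) s) (hg : ∀ s, HasDerivAt g (X (g s)) s)
    (hfU : ∀ s ∈ Icc 0 h, f s ∈ U) (hgU : ∀ s ∈ Icc 0 h, g s ∈ U) (hh : 0 ≤ h) :
    ‖(f h - g h) - (f 0 - g 0) - h • L (f 0 - g 0)‖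
      ≤ h * ((ε + ‖L‖ * K * h) * exp (K * h)) * ‖f 0 - g 0‖ := by
  have hw_le : ∀ s ∈ Icc 0 h, ‖f s - g s‖ ≤ ‖f 0 - g 0‖ * exp (K * h) := fun s hs =>
    (norm_sub_le_of_hasDerivAt_of_lipschitzOnWith hlip hf hg hfU hgU s hs).trans
      (by gcongr; exact hs.2)
  have hdrift := norm_sub_sub_le_of_hasDerivAt_of_lipschitzOnWith hlip hf hg hfU hgU
  have hε : 0 ≤ ε := (norm_nonneg _).trans (hL _ (hfU 0 ⟨le_rfl, hh⟩))
  have hF : ∀ s, HasDerivAt (fun s => (f s - g s) - s • L (f 0 - g 0))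
      (X (f s) - X (g s) - L (f 0 - g 0)) s := fun s => by
    simpa using ((hf s).fun_sub (hg s)).fun_sub ((hasDerivAt_id s).smul_const (L (f 0 - g 0)))
  have hF_le : ∀ s ∈ Icc 0 h, ‖X (f s) - X (g s) - L (f 0 - g 0)‖
      ≤ (ε + ‖L‖ * K * h) * exp (K * h) * ‖f 0 - g 0‖ := fun s hs => by
    have hsplit : X (f s) - X (g s) - L (f 0 - g 0)
        = (X (f s) - X (g s) - L (f s - g s)) + L ((f s - g s) - (f 0 - g 0)) := by
      rw [map_sub L (f s - g s)]; abel
    calc ‖X (f s) - X (g s) - L (f 0 - g 0)‖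
        ≤ ε * ‖f s - g s‖ + ‖L‖ * ‖(f s - g s) - (f 0 - g 0)‖ := by
          rw [hsplit]
          exact norm_add_le_of_le
            (hU.norm_image_sub_le_of_norm_fderiv_le' hXd hL (hgU s hs) (hfU s hs))
            (L.le_opNorm _)
      _ ≤ ε * (‖f 0 - g 0‖ * exp (K * h)) + ‖L‖ * (K * (‖f 0 - g 0‖ * exp (K * h)) * h) := by
          gcongr
          exacts [hw_le s hs, (hdrift s hs).trans (by gcongr; exact hs.2)]
      _ = (ε + ‖L‖ * K * h) * exp (K * h) * ‖f 0 - g 0‖ := by ring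
  have := norm_image_sub_le_of_norm_deriv_le_segment' (fun t _ => (hF t).hasDerivWithinAt)
    (fun t ht => hF_le t (Ico_subset_Icc_self ht)) h ⟨hh, le_rfl⟩
  simp only [zero_smul, sub_zero] at this
  calc _ = ‖(f h - g h) - h • L (f 0 - g 0) - (f 0 - g 0)‖ := by rw [sub_right_comm]
    _ ≤ _ := this
    _ = _ := by ring

structure IsFlow (X : E → E) (φ : ℝ → E → E) : Prop where
  zero : ∀ m, φ 0 m = m
  hasDerivAt : ∀ t m, HasDerivAt (fun s => φ s m) (X (φ t m)) t

namespace IsFlow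

variable {X : E → E} {φ : ℝ → E → E}

theorem zero_eq_id (hφ : IsFlow X φ) : φ 0 = id := funext hφ.zero

theorem eq_of_hasDerivAt (hφ : IsFlow X φ) (hX : LocallyLipschitz X) {x : ℝ → E}
    (hx : ∀ t, HasDerivAt x (X (x t)) t) (t : ℝ) : x t = φ t (x 0) := by
  refine congrFun (ODE_solution_unique_of_locallyLipschitz (v := fun _ => X) (fun _ y => ?_) hx
    (fun t => hφ.hasDerivAt t (x 0)) (t₀ := 0) (hφ.zero _).symm) t
  obtain ⟨K, s, hs, hlip⟩ := hX y
  exact ⟨K, s, hs, .of_forall fun _ => hlip⟩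

theorem add (hφ : IsFlow X φ) (hX : LocallyLipschitz X) (t s : ℝ) (m : E) :
    φ (t + s) m = φ s (φ t m) := by
  have hshift : ∀ u, HasDerivAt (fun u => φ (t + u) m) (X (φ (t + u) m)) u := fun u =>
    (hφ.hasDerivAt (t + u) m).comp_const_add t u
  simpa using hφ.eq_of_hasDerivAt hX hshift s

theorem norm_fderiv_sub_id_sub_smul_le (hφ : IsFlow X φ) {L : E →L[ℝ] E} {K : ℝ≥0}
    {p : E} {r M ε h : ℝ} (hr : 0 < r) (hXd : ∀ y ∈ closedBall p r, DifferentiableAt ℝ X y)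
    (hlip : LipschitzOnWith K X (closedBall p r))
    (hL : ∀ y ∈ closedBall p r, ‖fderiv ℝ X y - L‖ ≤ ε) (hM : ∀ y ∈ closedBall p r, ‖X y‖ < M)
    (hφd : DifferentiableAt ℝ (φ h) p) (hh : 0 ≤ h) (hhM : M * h ≤ r / 2) :
    ‖fderiv ℝ (φ h) p - ContinuousLinearMap.id ℝ E - h • L‖
      ≤ h * ((ε + ‖L‖ * K * h) * exp (K * h)) := by
  have hp : p ∈ closedBall p r := mem_closedBall_self hr.le
  have hε : 0 ≤ ε := (norm_nonneg _).trans (hL p hp)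
  have hstay : ∀ y ∈ closedBall p (r / 2), ∀ s ∈ Icc 0 h, φ s y ∈ closedBall p r :=
    fun y hy => mem_closedBall_of_hasDerivAt_of_norm_lt hM ((norm_nonneg _).trans (hM p hp).le)
      (hφ.hasDerivAt · y) (by rw [hφ.zero]; linarith [mem_closedBall_iff_norm.1 hy])
  have hG : HasFDerivAt (fun y => φ h y - y - h • L y)
      (fderiv ℝ (φ h) p - ContinuousLinearMap.id ℝ E - h • L) p :=
    (hφd.hasFDerivAt.sub (hasFDerivAt_id p)).sub (L.hasFDerivAt.const_smul h)
  refine hG.le_of_lip' (by positivity) ?_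
  filter_upwards [closedBall_mem_nhds p (half_pos hr)] with y hy
  have := norm_sub_sub_sub_smul_le_of_hasDerivAt (convex_closedBall p r) hXd hlip hL
    (hφ.hasDerivAt · y) (hφ.hasDerivAt · p) (hstay y hy)
    (hstay p (mem_closedBall_self (half_pos hr).le)) hh
  simp only [hφ.zero] at this
  convert this using 2
  simp only [map_sub, smul_sub]
  abel

theorem hasDerivWithinAt_fderiv_Ici (hφ : IsFlow X φ) (hX : ContDiff ℝ 1 X)
    (hφd : ∀ t, Differentiable ℝ (φ t)) (p : E) :
    HasDerivWithinAt (fun t => fderiv ℝ (φ t) p) (fderiv ℝ X p) (Ici 0) 0 := by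
  set L := fderiv ℝ X p
  rw [hasDerivWithinAt_iff_isLittleO]
  refine Asymptotics.IsLittleO.of_bound fun ε hε => ?_
  obtain ⟨K, V, hV, hlip⟩ := hX.locallyLipschitz p
  have hnear : ∀ᶠ y in 𝓝 p, y ∈ V ∧ ‖fderiv ℝ X y - L‖ ≤ ε / 2 ∧ ‖X y‖ < ‖X p‖ + 1 := by
    refine (show ∀ᶠ y in 𝓝 p, y ∈ V from hV).and (.and ?_ ?_)
    · simpa only [dist_eq_norm] using
        (hX.continuous_fderiv one_ne_zero).continuousAt.eventually
          (closedBall_mem_nhds L (half_pos hε))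
    · exact (hX.continuous.norm.tendsto p).eventually_lt_const (lt_add_one _)
  obtain ⟨r, hr, hball⟩ := nhds_basis_closedBall.eventually_iff.1 hnear
  have hsmall : ∀ᶠ h in 𝓝 (0 : ℝ), (ε / 2 + ‖L‖ * K * h) * exp (K * h) < ε ∧
      (‖X p‖ + 1) * h ≤ r / 2 := by
    have hB : Continuous fun h : ℝ => (ε / 2 + ‖L‖ * K * h) * exp (K * h) := by fun_prop
    have hT : Continuous fun h : ℝ => (‖X p‖ + 1) * h := by fun_prop
    refine ((hB.tendsto 0).eventually_lt_const ?_).and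
      (((hT.tendsto 0).eventually_lt_const ?_).mono fun _ => le_of_lt) <;> simp [hε, hr]
  filter_upwards [self_mem_nhdsWithin, nhdsWithin_le_nhds hsmall] with h (hh : 0 ≤ h) hBh
  rw [hφ.zero_eq_id, fderiv_id, sub_zero, Real.norm_of_nonneg hh]
  refine (hφ.norm_fderiv_sub_id_sub_smul_le hr (fun y _ => (hX.differentiable one_ne_zero) y)
    (hlip.mono fun y hy => (hball hy).1) (fun y hy => (hball hy).2.1)
    (fun y hy => (hball hy).2.2) (hφd h p) hh hBh.2).trans ?_
  rw [mul_comm ε]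
  exact mul_le_mul_of_nonneg_left hBh.1.le hh

theorem neg (hφ : IsFlow X φ) : IsFlow (-X) fun t => φ (-t) where
  zero m := by simpa using hφ.zero m
  hasDerivAt t m := by
    simpa [Function.comp_def] using (hφ.hasDerivAt (-t) m).scomp t (hasDerivAt_neg t)

/-- Grönwall's inequality only runs forward in time, so the derivative from the left comes from
the flow of `-X`. -/
theorem hasDerivAt_fderiv_zero (hφ : IsFlow X φ) (hX : ContDiff ℝ 1 X)
    (hφd : ∀ t, Differentiable ℝ (φ t)) (p : E) :
    HasDerivAt (fun t => fderiv ℝ (φ t) p) (fderiv ℝ X p) 0 := by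
  have hback := hφ.neg.hasDerivWithinAt_fderiv_Ici hX.neg (fun t => hφd (-t)) p
  rw [fderiv_neg] at hback
  have hIic : HasDerivWithinAt (fun t => fderiv ℝ (φ t) p) (fderiv ℝ X p) (Iic 0) 0 := by
    have := hback.scomp_of_eq (0 : ℝ) (hasDerivAt_neg (0 : ℝ)).hasDerivWithinAt (s := Iic 0)
      (fun _ ht => mem_Ici.2 (neg_nonneg.2 ht)) neg_zero.symm
    simpa only [neg_one_smul, neg_neg, Function.comp_def] using this
  have := hIic.union (hφ.hasDerivWithinAt_fderiv_Ici hX hφd p)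
  rwa [Iic_union_Ici, hasDerivWithinAt_univ] at this

theorem hasDerivAt_fderiv (hφ : IsFlow X φ) (hX : ContDiff ℝ 1 X)
    (hφd : ∀ t, Differentiable ℝ (φ t)) (t : ℝ) (m : E) :
    HasDerivAt (fun s => fderiv ℝ (φ s) m) ((fderiv ℝ X (φ t m)).comp (fderiv ℝ (φ t) m)) t := by
  have hsplit : ∀ s, fderiv ℝ (φ s) m = (fderiv ℝ (φ (s - t)) (φ t m)).comp (fderiv ℝ (φ t) m) :=
    fun s => by
      have : φ s = φ (s - t) ∘ φ t :=
        funext fun y => by rw [Function.comp_apply, ← hφ.add hX.locallyLipschitz, add_sub_cancel]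
      rw [this, fderiv_comp m (hφd _ _) (hφd t m)]
  rw [funext hsplit]
  have hshift := HasDerivAt.comp_sub_const t t (by
    simpa only [sub_self] using hφ.hasDerivAt_fderiv_zero hX hφd (φ t m))
  simpa using hshift.clm_comp (hasDerivAt_const t (fderiv ℝ (φ t) m))

end IsFlow

theorem tangent_integral_curve_iff {n : ℕ}
    (X : (Fin n → ℝ) → (Fin n → ℝ)) (hX : ContDiff ℝ (⊤ : ℕ∞) X)
    (φ : ℝ → (Fin n → ℝ) → (Fin n → ℝ))
    (hφ0 : ∀ m, φ 0 m = m)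
    (hφflow : ∀ t m, HasDerivAt (fun s => φ s m) (X (φ t m)) t)
    (hφsm : ∀ t, ContDiff ℝ (⊤ : ℕ∞) (φ t))
    (Γ : (Fin n → ℝ) → (Fin n → ℝ) →ₗ[ℝ] (Fin n → ℝ) →ₗ[ℝ] (Fin n → ℝ))
    (x b : ℝ → (Fin n → ℝ))
    (hx : ∀ t, HasDerivAt x (X (x t)) t)
    (hb : Differentiable ℝ b) :
    (∀ t, b t = fderiv ℝ (φ t) (x 0) (b 0)) ↔
      ∀ t, deriv b t + Γ (x t) (X (x t)) (b t)
        = (fderiv ℝ X (x t) (b t) + Γ (x t) (b t) (X (x t)))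
          + (Γ (x t) (X (x t)) (b t) - Γ (x t) (b t) (X (x t))) := by
  have hX1 : ContDiff ℝ 1 X := hX.of_le (by exact_mod_cast le_top)
  have hφ : IsFlow X φ := ⟨hφ0, hφflow⟩
  have hφd : ∀ t, Differentiable ℝ (φ t) := fun t => (hφsm t).differentiable (by simp)
  set c : ℝ → (Fin n → ℝ) := fun t => fderiv ℝ (φ t) (x 0) (b 0)
  have hc : ∀ t, HasDerivAt c (fderiv ℝ X (x t) (c t)) t := fun t => by
    rw [hφ.eq_of_hasDerivAt hX1.locallyLipschitz hx t]
    simpa using (hφ.hasDerivAt_fderiv hX1 hφd t (x 0)).clm_apply (hasDerivAt_const t (b 0))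
  have hc0 : c 0 = b 0 := by simp [c, hφ.zero_eq_id]
  have hA : Continuous fun t => fderiv ℝ X (x t) :=
    (hX1.continuous_fderiv one_ne_zero).comp
      (continuous_iff_continuousAt.2 fun t => (hx t).continuousAt)
  simp only [add_add_sub_cancel, add_left_inj]
  refine ⟨fun hbc t => ?_, fun hb' => ?_⟩
  · rw [show b = c from funext hbc]
    exact (hc t).deriv
  · have hbX : ∀ t, HasDerivAt b (fderiv ℝ X (x t) (b t)) t := fun t => hb' t ▸ (hb t).hasDerivAt
    exact congrFun (ODE_solution_unique_of_continuous_linear hA hbX hc hc0.symm)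
end

section
/- On M = ℝ⁴ with coordinates (x, y, u, v), let π = ∂/∂x ∧ ∂/∂u + (x²+y²) ∂/∂y ∧ ∂/∂v and H(x,y,u,v) = u. The path α(t) = (a(t), x(t)) in T*ℝ⁴ with a(t) = (0,1,1,0) and x(t) = (t,0,0,0) satisfies: (i) x(0) = 0, π^#_{x(0)}(a(0)) = ẋ(0) (initially cotangent); (ii) the stationarity equations ẋ(t) = X_H(x(t)) and ȧ(t) = −(K^H)*(a(t)) (with K^H = 0 since X_H = ∂/∂x is constant); but (iii) π^#_{x(t)}(a(t)) ≠ ẋ(t) for t ≠ 0, so α is not a cotangent path for π. -/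
open Matrix

noncomputable def pi19 (m : Fin 4 → ℝ) : Matrix (Fin 4) (Fin 4) ℝ :=
  !![0, 0, 1, 0;
     0, 0, 0, m 0 ^ 2 + m 1 ^ 2;
     -1, 0, 0, 0;
     0, -(m 0 ^ 2 + m 1 ^ 2), 0, 0]

noncomputable def H19 : (Fin 4 → ℝ) → ℝ := fun m => m 2

noncomputable def x19 : ℝ → (Fin 4 → ℝ) := fun t => ![t, 0, 0, 0]

noncomputable def a19 : ℝ → (Fin 4 → ℝ) := fun _ => ![0, 1, 1, 0]

lemma gradH19 (m : Fin 4 → ℝ) : gradf H19 m = ![0,0,1,0] := by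
  funext i
  have h : fderiv ℝ H19 m = (ContinuousLinearMap.proj 2 : (Fin 4 → ℝ) →L[ℝ] ℝ) :=
    (ContinuousLinearMap.proj 2 : (Fin 4 → ℝ) →L[ℝ] ℝ).hasFDerivAt.fderiv
  simp only [gradf, h]
  fin_cases i <;> simp [Pi.single]

lemma hamConst (m : Fin 4 → ℝ) : ham pi19 H19 m = ![1, 0, 0, 0] := by
  simp only [ham, gradH19, pi19]
  funext i
  fin_cases i <;>
    simp [Matrix.mulVec, dotProduct, Fin.sum_univ_four]

theorem initially_cotangent_stationary_not_cotangent :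
    (x19 0 = 0 ∧ pi19 (x19 0) *ᵥ a19 0 = ![1, 0, 0, 0]) ∧
    (∀ t, HasDerivAt x19 (![1, 0, 0, 0]) t ∧ ham pi19 H19 (x19 t) = ![1, 0, 0, 0]) ∧
    (∀ (t : ℝ) (i : Fin 4), HasDerivAt (fun s => a19 s i)
      (-(∑ j, a19 t j * fderiv ℝ (fun p => ham pi19 H19 p j) (x19 t) (Pi.single i 1))) t) ∧
    (∀ t : ℝ, t ≠ 0 → pi19 (x19 t) *ᵥ a19 t ≠ ![1, 0, 0, 0]) := by
  refine ⟨⟨?_, ?_⟩, fun t => ⟨?_, hamConst _⟩, ?_, ?_⟩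
  · funext i; fin_cases i <;> simp [x19]
  · funext i
    fin_cases i <;>
      simp [pi19, x19, a19, Matrix.mulVec, dotProduct, Fin.sum_univ_four]
  · have : ∀ i : Fin 4, HasDerivAt (fun s => x19 s i) (![1,0,0,0] i) t := by
      intro i
      fin_cases i <;> simp [x19] <;>
        first
          | exact hasDerivAt_id t
          | exact hasDerivAt_const t 0
    exact hasDerivAt_pi.2 this
  · intro t i
    have hc : (fun p => ham pi19 H19 p) = fun _ => ![1,0,0,0] := funext hamConst
    have hz : ∀ j : Fin 4, fderiv ℝ (fun p => ham pi19 H19 p j) (x19 t) = 0 := by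
      intro j
      have : (fun p => ham pi19 H19 p j) = fun _ => (![1,0,0,0] : Fin 4 → ℝ) j := by
        funext p; rw [hamConst]
      rw [this, fderiv_fun_const]
      rfl
    have : (-(∑ j, a19 t j * fderiv ℝ (fun p => ham pi19 H19 p j) (x19 t) (Pi.single i 1))) = 0 := by
      simp [hz]
    rw [this]
    exact hasDerivAt_const t _
  · intro t ht h
    have := congrFun h 3
    simp [pi19, x19, a19, Matrix.mulVec, dotProduct, Fin.sum_univ_four] at this
    exact ht this
end
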